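/- (Consistency of the closed-form solutions) Let L > 0, 0 < a < b < L and P > 0. For each integer N ≥ 2 set Δs = (b − a)/(N − 1), s_i = a + (i − 1)Δs for i = 1, …, N, and define u₁^{(N)}(x) = P Δs Σ_{i=1}^{N} (1/2)[ (x/L − 1) erf(s_i/(√2 Δs)) + (x/L) erf((L − s_i)/(√2 Δs)) − erf((x − s_i)/(√2 Δs)) ]. Define u₂(x) = P(G(x, a) − G(x, b)) with G(x, x′) = (1 − x′/L)x − max(x − x′, 0). Then for every x ∈ (0, L) with x ≠ a and x ≠ b, lim_{N→∞} u₁^{(N)}(x) = u₂(x). -/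

import Mathlib

/-- The error function `erf x = (2/√π) ∫₀ˣ exp(−t²) dt`. -/
noncomputable def erf (x : ℝ) : ℝ :=
  (2 / Real.sqrt Real.pi) * ∫ t in (0 : ℝ)..x, Real.exp (-t ^ 2)

/-- The closed-form SPH solution with `N` cells placed uniformly in `(a, b)`:
`u₁^{(N)}(x) = P Δs Σ_{i=1}^{N} (1/2)[(x/L − 1) erf(sᵢ/(√2 Δs)) + (x/L) erf((L − sᵢ)/(√2 Δs))
− erf((x − sᵢ)/(√2 Δs))]` with `Δs = (b − a)/(N − 1)` and `sᵢ = a + (i − 1)Δs`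
(encoded via `i ∈ Finset.range N`). -/
noncomputable def u1SPH (L a b P : ℝ) (N : ℕ) (x : ℝ) : ℝ :=
  P * ((b - a) / ((N : ℝ) - 1)) * ∑ i ∈ Finset.range N, (1 / 2 : ℝ) *
    ((x / L - 1) * erf ((a + (i : ℝ) * ((b - a) / ((N : ℝ) - 1))) /
        (Real.sqrt 2 * ((b - a) / ((N : ℝ) - 1))))
      + (x / L) * erf ((L - (a + (i : ℝ) * ((b - a) / ((N : ℝ) - 1)))) /
        (Real.sqrt 2 * ((b - a) / ((N : ℝ) - 1))))
      - erf ((x - (a + (i : ℝ) * ((b - a) / ((N : ℝ) - 1)))) /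
        (Real.sqrt 2 * ((b - a) / ((N : ℝ) - 1)))))

/-- The Green's function `G(x, x′) = (1 − x′/L) x − max(x − x′, 0)` of `−d²/dx²` on
`(0, L)` with homogeneous Dirichlet boundary conditions. -/
noncomputable def greenG (L x x' : ℝ) : ℝ :=
  (1 - x' / L) * x - max (x - x') 0

/-!
With `Δs = (b - a) / (N - 1)` and `g t = erf (t / √2)`, each of the three sums in `u1SPH` is a
lattice sum `Δs * ∑ i < N, g (c / Δs - i)` for `c = -a`, `L - a`, `x - a`. Replacing `g` by the
step `t ↦ ±1` turns it into `2 Δs #{i < N | i Δs < c} - N Δs → 2 min (b - a) (max c 0) - (b - a)`.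
The error is at most `2` for each of the `≈ 2R` lattice points with `|c / Δs - i| < R` and at
most the tail `1 - g R + g (-R) + 1` elsewhere; taking `R = Δs^(-1/2)` makes both contributions
vanish. Combining the three limits gives `P (G(x, a) - G(x, b))`.
-/

open MeasureTheory Filter Topology Finset

lemma integrable_exp_neg_sq : Integrable (fun t : ℝ => Real.exp (-t ^ 2)) := by
  simpa using integrable_exp_neg_mul_sq (b := 1) one_pos

lemma erf_neg (t : ℝ) : erf (-t) = -erf t := by
  have h := intervalIntegral.integral_comp_neg (a := 0) (b := -t) (fun u : ℝ => Real.exp (-u ^ 2))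
  simp only [even_two, Even.neg_pow, neg_zero, neg_neg] at h
  rw [erf, h, intervalIntegral.integral_symm, erf]
  ring

lemma monotone_erf : Monotone erf := by
  intro s t hst
  have hint := integrable_exp_neg_sq.intervalIntegrable (a := 0) (b := t)
  have hdiff : erf t - erf s = 2 / √Real.pi * ∫ u in s..t, Real.exp (-u ^ 2) := by
    rw [erf, erf, ← mul_sub, intervalIntegral.integral_interval_sub_left hint
      integrable_exp_neg_sq.intervalIntegrable]
  have hint_nonneg : 0 ≤ ∫ u in s..t, Real.exp (-u ^ 2) :=
    intervalIntegral.integral_nonneg hst fun u _ => (Real.exp_pos _).le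
  exact sub_nonneg.1 (hdiff ▸ mul_nonneg (by positivity) hint_nonneg)

lemma tendsto_erf_atTop : Tendsto erf atTop (𝓝 1) := by
  have h := intervalIntegral_tendsto_integral_Ioi 0 integrable_exp_neg_sq.integrableOn tendsto_id
  have hgauss : ∫ u in Set.Ioi (0 : ℝ), Real.exp (-u ^ 2) = √Real.pi / 2 := by
    simpa using integral_gaussian_Ioi 1
  rw [hgauss] at h
  convert h.const_mul (2 / √Real.pi) using 2
  · rfl
  · field_simp

lemma tendsto_erf_atBot : Tendsto erf atBot (𝓝 (-1)) :=
  (tendsto_erf_atTop.comp tendsto_neg_atBot_atTop).neg.congr fun t => by simp [erf_neg]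

lemma filter_range_natCast_lt (N : ℕ) (y : ℝ) :
    (range N).filter (fun i : ℕ => (i : ℝ) < y) = range (min N ⌈y⌉₊) := by
  ext i
  simp [Nat.lt_ceil]

lemma card_filter_range_abs_sub_natCast_lt_le (N : ℕ) (y : ℝ) {R : ℝ} (hR : 0 ≤ R) :
    (#((range N).filter (fun i : ℕ => |y - i| < R)) : ℝ) ≤ 2 * R + 1 := by
  have hsub : (range N).filter (fun i : ℕ => |y - i| < R) ⊆ Ico ⌈y - R⌉₊ ⌈y + R⌉₊ := by
    intro i hi
    obtain ⟨hlo, hhi⟩ := abs_sub_lt_iff.1 (mem_filter.1 hi).2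
    exact mem_Ico.2 ⟨Nat.ceil_le.2 (by linarith), Nat.lt_ceil.2 (by linarith)⟩
  have hceil : ⌈y + R⌉₊ ≤ ⌈y - R⌉₊ + ⌈2 * R⌉₊ := by
    simpa [show y - R + 2 * R = y + R by ring] using Nat.ceil_add_le (y - R) (2 * R)
  calc (#((range N).filter (fun i : ℕ => |y - i| < R)) : ℝ)
      ≤ ⌈2 * R⌉₊ := by
        have := (card_le_card hsub).trans_eq (Nat.card_Ico _ _)
        exact_mod_cast this.trans (by omega)
    _ ≤ 2 * R + 1 := (Nat.ceil_lt_add_one (by positivity)).le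

lemma sum_range_ite_natCast_lt (N : ℕ) (y : ℝ) :
    ∑ i ∈ range N, (if (i : ℝ) < y then (1 : ℝ) else -1) = 2 * (min N ⌈y⌉₊ : ℕ) - N := by
  have hcard := card_filter_add_card_filter_not (s := range N) (fun i : ℕ => (i : ℝ) < y)
  rw [filter_range_natCast_lt, card_range, card_range] at hcard
  have hcard' : ((min N ⌈y⌉₊ : ℕ) : ℝ) + #((range N).filter (fun i : ℕ => ¬(i : ℝ) < y)) = N := by
    exact_mod_cast hcard
  rw [sum_ite, sum_const, sum_const, filter_range_natCast_lt, card_range, nsmul_eq_mul,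
    nsmul_eq_mul]
  linarith

lemma max_le_natCeil_div_mul (c : ℝ) {h : ℝ} (hh : 0 < h) : max c 0 ≤ ⌈c / h⌉₊ * h :=
  max_le ((div_le_iff₀ hh).1 (Nat.le_ceil _)) (by positivity)

lemma natCeil_div_mul_lt (c : ℝ) {h : ℝ} (hh : 0 < h) : ⌈c / h⌉₊ * h < max c 0 + h := by
  have hceil : (⌈c / h⌉₊ : ℝ) < max c 0 / h + 1 :=
    (Nat.cast_le.2 (Nat.ceil_mono (div_le_div_of_nonneg_right (le_max_left c 0) hh.le))).trans_lt
      (Nat.ceil_lt_add_one (by positivity))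
  calc (⌈c / h⌉₊ : ℝ) * h < (max c 0 / h + 1) * h := by gcongr
    _ = max c 0 + h := by field_simp

lemma tendsto_natCeil_div_mul {α : Type*} {l : Filter α} {h : α → ℝ}
    (hh : Tendsto h l (𝓝[>] 0)) (c : ℝ) :
    Tendsto (fun n => ⌈c / h n⌉₊ * h n) l (𝓝 (max c 0)) := by
  have hpos : ∀ᶠ n in l, 0 < h n := hh.eventually self_mem_nhdsWithin
  have hupper : Tendsto (fun n => max c 0 + h n) l (𝓝 (max c 0)) := by
    simpa using (tendsto_nhds_of_tendsto_nhdsWithin hh).const_add (max c 0)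
  exact tendsto_of_tendsto_of_tendsto_of_le_of_le' tendsto_const_nhds hupper
    (hpos.mono fun n hn => max_le_natCeil_div_mul c hn)
    (hpos.mono fun n hn => (natCeil_div_mul_lt c hn).le)

section LatticeSum

variable {h : ℕ → ℝ} {ℓ : ℝ}

lemma tendsto_mul_sum_ite_natCast_lt (hh : Tendsto h atTop (𝓝[>] 0))
    (hℓ : Tendsto (fun N : ℕ => N * h N) atTop (𝓝 ℓ)) (c : ℝ) :
    Tendsto (fun N => h N * ∑ i ∈ range N, (if (i : ℝ) < c / h N then (1 : ℝ) else -1))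
      atTop (𝓝 (2 * min ℓ (max c 0) - ℓ)) := by
  refine (((hℓ.min (tendsto_natCeil_div_mul hh c)).const_mul 2).sub hℓ).congr' ?_
  filter_upwards [hh.eventually self_mem_nhdsWithin] with N hN
  rw [sum_range_ite_natCast_lt, Nat.cast_min, ← min_mul_of_nonneg _ _ (le_of_lt hN)]
  ring

variable {g : ℝ → ℝ}

lemma abs_sub_ite_pos_le (hg : Monotone g) (hbot : Tendsto g atBot (𝓝 (-1)))
    (htop : Tendsto g atTop (𝓝 1)) (R t : ℝ) :
    |g t - if 0 < t then 1 else -1| ≤ (if |t| < R then 2 else 0) + ((1 - g R) + (g (-R) + 1)) := by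
  have hle (s : ℝ) : g s ≤ 1 := hg.ge_of_tendsto htop s
  have hge (s : ℝ) : -1 ≤ g s := hg.le_of_tendsto hbot s
  have htail : 0 ≤ (1 - g R) + (g (-R) + 1) := by linarith [hle R, hge (-R)]
  rw [abs_le]
  split_ifs with hnear hpos hpos
  · constructor <;> linarith [hle t, hge t]
  · constructor <;> linarith [hle t, hge t]
  · rw [not_lt, abs_of_pos hpos] at hnear
    constructor <;> linarith [hle t, hge (-R), hg hnear]
  · rw [not_lt, abs_of_nonpos (not_lt.1 hpos)] at hnear
    constructor <;> linarith [hge t, hle R, hg (show t ≤ -R by linarith)]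

lemma abs_mul_sum_sub_mul_sum_ite_le (hg : Monotone g) (hbot : Tendsto g atBot (𝓝 (-1)))
    (htop : Tendsto g atTop (𝓝 1)) {δ R : ℝ} (hδ : 0 ≤ δ) (hR : 0 ≤ R) (N : ℕ) (y : ℝ) :
    |δ * ∑ i ∈ range N, g (y - i) - δ * ∑ i ∈ range N, (if (i : ℝ) < y then (1 : ℝ) else -1)|
      ≤ 4 * (R * δ) + 2 * δ + N * δ * ((1 - g R) + (g (-R) + 1)) := by
  have hterm (i : ℕ) : |g (y - i) - if (i : ℝ) < y then 1 else -1|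
      ≤ (if |y - i| < R then 2 else 0) + ((1 - g R) + (g (-R) + 1)) := by
    simpa only [sub_pos] using abs_sub_ite_pos_le hg hbot htop R (y - i)
  have hsum : |∑ i ∈ range N, (g (y - i) - if (i : ℝ) < y then 1 else -1)|
      ≤ 2 * #((range N).filter (fun i : ℕ => |y - i| < R)) + N * ((1 - g R) + (g (-R) + 1)) := by
    refine (abs_sum_le_sum_abs _ _).trans ((sum_le_sum fun i _ => hterm i).trans_eq ?_)
    rw [sum_add_distrib, sum_ite, sum_const, sum_const_zero, sum_const, card_range]
    simp only [nsmul_eq_mul]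
    ring
  have hnear := card_filter_range_abs_sub_natCast_lt_le N y hR
  rw [← mul_sub, ← sum_sub_distrib, abs_mul, abs_of_nonneg hδ]
  calc δ * |∑ i ∈ range N, (g (y - i) - if (i : ℝ) < y then 1 else -1)|
      ≤ δ * (2 * (2 * R + 1) + N * ((1 - g R) + (g (-R) + 1))) := by
        gcongr
        linarith
    _ = _ := by ring

theorem tendsto_mul_sum_comp_sub_natCast (hg : Monotone g) (hbot : Tendsto g atBot (𝓝 (-1)))
    (htop : Tendsto g atTop (𝓝 1)) (hh : Tendsto h atTop (𝓝[>] 0))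
    (hℓ : Tendsto (fun N : ℕ => N * h N) atTop (𝓝 ℓ)) (c : ℝ) :
    Tendsto (fun N => h N * ∑ i ∈ range N, g (c / h N - i)) atTop
      (𝓝 (2 * min ℓ (max c 0) - ℓ)) := by
  have hpos : ∀ᶠ N in atTop, 0 < h N := hh.eventually self_mem_nhdsWithin
  have hh0 : Tendsto h atTop (𝓝 0) := tendsto_nhds_of_tendsto_nhdsWithin hh
  have hsqrt : Tendsto (fun N => √(h N)) atTop (𝓝[>] 0) :=
    tendsto_nhdsWithin_iff.2 ⟨(Real.continuous_sqrt.tendsto' 0 0 Real.sqrt_zero).comp hh0,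
      hpos.mono fun N hN => Real.sqrt_pos.2 hN⟩
  set R : ℕ → ℝ := fun N => (√(h N))⁻¹
  have hR : Tendsto R atTop atTop := tendsto_inv_nhdsGT_zero.comp hsqrt
  have hRh : ∀ N, R N * h N = √(h N) := fun N => by rw [inv_mul_eq_div, Real.div_sqrt]
  have htail : Tendsto (fun N => (1 - g (R N)) + (g (-R N) + 1)) atTop (𝓝 0) := by
    simpa using ((tendsto_const_nhds (x := (1 : ℝ))).sub (htop.comp hR)).add
      ((hbot.comp (tendsto_neg_atTop_atBot.comp hR)).add_const 1)
  have hbound : Tendsto (fun N => 4 * (R N * h N) + 2 * h N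
      + N * h N * ((1 - g (R N)) + (g (-R N) + 1))) atTop (𝓝 0) := by
    simp only [hRh]
    simpa using (((tendsto_nhds_of_tendsto_nhdsWithin hsqrt).const_mul 4).add
      (hh0.const_mul 2)).add (hℓ.mul htail)
  have herr : Tendsto (fun N => h N * ∑ i ∈ range N, g (c / h N - i)
      - h N * ∑ i ∈ range N, (if (i : ℝ) < c / h N then (1 : ℝ) else -1)) atTop (𝓝 0) :=
    squeeze_zero_norm' (hpos.mono fun N hN => (Real.norm_eq_abs _).trans_le <|
      abs_mul_sum_sub_mul_sum_ite_le hg hbot htop hN.le (R := R N) (by positivity) N (c / h N))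
      hbound
  simpa using herr.add (tendsto_mul_sum_ite_natCast_lt hh hℓ c)

end LatticeSum

lemma tendsto_div_natCast_sub_one_nhdsGT {ℓ : ℝ} (hℓ : 0 < ℓ) :
    Tendsto (fun N : ℕ => ℓ / ((N : ℝ) - 1)) atTop (𝓝[>] 0) := by
  have hden : Tendsto (fun N : ℕ => (N : ℝ) - 1) atTop atTop :=
    tendsto_atTop_add_const_right _ (-1) tendsto_natCast_atTop_atTop
  exact tendsto_nhdsWithin_iff.2 ⟨tendsto_const_nhds.div_atTop hden,
    (hden.eventually_gt_atTop 0).mono fun N hN => div_pos hℓ hN⟩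

lemma tendsto_natCast_mul_div_natCast_sub_one (ℓ : ℝ) :
    Tendsto (fun N : ℕ => N * (ℓ / ((N : ℝ) - 1))) atTop (𝓝 ℓ) := by
  simpa using ((tendsto_natCast_div_add_atTop (-1 : ℝ)).const_mul ℓ).congr fun N => by ring

lemma tendsto_mul_sum_erf {h : ℕ → ℝ} {ℓ : ℝ} (hh : Tendsto h atTop (𝓝[>] 0))
    (hℓ : Tendsto (fun N : ℕ => N * h N) atTop (𝓝 ℓ)) (x a : ℝ) :
    Tendsto (fun N => h N * ∑ i ∈ range N, erf ((x - (a + i * h N)) / (√2 * h N))) atTop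
      (𝓝 (2 * min ℓ (max (x - a) 0) - ℓ)) := by
  have hsqrt2 : (0 : ℝ) < √2 := by positivity
  have hg : Monotone fun t => erf (t / √2) :=
    monotone_erf.comp fun s t hst => div_le_div_of_nonneg_right hst hsqrt2.le
  refine (tendsto_mul_sum_comp_sub_natCast hg
    (tendsto_erf_atBot.comp (tendsto_id.atBot_div_const hsqrt2))
    (tendsto_erf_atTop.comp (tendsto_id.atTop_div_const hsqrt2)) hh hℓ (x - a)).congr' ?_
  filter_upwards [hh.eventually self_mem_nhdsWithin] with N hN
  congr 1
  refine sum_congr rfl fun i _ => congrArg erf ?_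
  field_simp
  ring

lemma greenG_sub_greenG (L x : ℝ) {a b : ℝ} (hab : a ≤ b) :
    greenG L x a - greenG L x b = (b - a) / L * x - min (b - a) (max (x - a) 0) := by
  unfold greenG
  rcases le_total x a with hxa | hax
  · rw [max_eq_right (by linarith), max_eq_right (by linarith), min_eq_right (by linarith)]
    ring
  rcases le_total x b with hxb | hbx
  · rw [max_eq_left (by linarith), max_eq_right (by linarith), min_eq_right (by linarith)]
    ring
  · rw [max_eq_left (by linarith), max_eq_left (by linarith), min_eq_left (by linarith)]
    ring

theorem sph_solution_tendsto_cell_density_solution_general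
    (L a b P : ℝ) (ha : 0 < a) (hab : a < b) (hbL : b < L)
    (x : ℝ) :
    Filter.Tendsto (fun N : ℕ => u1SPH L a b P N x) Filter.atTop
      (nhds (P * (greenG L x a - greenG L x b))) := by
  have hlim := tendsto_mul_sum_erf (tendsto_div_natCast_sub_one_nhdsGT (sub_pos.2 hab))
    (tendsto_natCast_mul_div_natCast_sub_one (b - a))
  have hA := (hlim 0 a).neg
  have hB := hlim L a
  have hC := hlim x a
  have hcomb := (((hA.const_mul ((x / L - 1) / 2)).add (hB.const_mul (x / L / 2))).sub
    (hC.const_mul (1 / 2))).const_mul P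
  rw [greenG_sub_greenG L x hab.le]
  convert hcomb using 2 with N
  · simp only [u1SPH, zero_sub, neg_div, erf_neg, sum_neg_distrib, mul_add, mul_sub,
      sum_add_distrib, sum_sub_distrib, ← mul_sum]
    ring
  · rw [max_eq_right (by linarith : 0 - a ≤ 0), max_eq_left (by linarith : 0 ≤ L - a),
      min_eq_right (by linarith : 0 ≤ b - a), min_eq_left (by linarith : b - a ≤ L - a)]
    ring

/-- Consistency of the closed-form solutions: as the number `N` of uniformly placed
cells tends to infinity, the SPH solution `u₁^{(N)}(x)` converges to the cell density
solution `u₂(x) = P (G(x, a) − G(x, b))` at every `x ∈ (0, L)` with `x ≠ a`, `x ≠ b`. -/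
theorem sph_solution_tendsto_cell_density_solution
    (L a b P : ℝ) (hL : 0 < L) (ha : 0 < a) (hab : a < b) (hbL : b < L) (hP : 0 < P)
    (x : ℝ) (hx : x ∈ Set.Ioo (0 : ℝ) L) (hxa : x ≠ a) (hxb : x ≠ b) :
    Filter.Tendsto (fun N : ℕ => u1SPH L a b P N x) Filter.atTop
      (nhds (P * (greenG L x a - greenG L x b))) :=
  sph_solution_tendsto_cell_density_solution_general L a b P ha hab hbL x
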